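/- arXiv:math/0501538 — 2 statements merged into one kernel-verified Lean document; each statement's English description precedes it below -/
import Mathlib

section
/- The map φ is injective on the set P of join-irreducible elements of Γ(X;γ), and its image is a filter of ℕ × ℕ equipped with the order (p,q) ≤ (p',q') iff p ≥ p' and q ≥ q' (i.e., if (p,q) is in the image and p' ≤ p, q' ≤ q, then (p',q') is in the image). Hence P is order-isomorphic to a finite filter of this poset. -/
def IsTup (n m : ℕ) (c : Fin m → ℕ) : Prop :=
  StrictMono c ∧ ∀ i, 1 ≤ c i ∧ c i ≤ n

def Gamma (n m : ℕ) : Set (Fin m → ℕ) := {c | IsTup n m c}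

def GammaF (n m : ℕ) (b : Fin m → ℕ) : Set (Fin m → ℕ) :=
  {c | IsTup n m c ∧ b ≤ c}

/-- `prev c i` is `c (i-1)`, with the convention `c 0 = 0` (1-based indexing). -/
def prev {m : ℕ} (c : Fin m → ℕ) (i : Fin m) : ℕ :=
  if _ : i.1 = 0 then 0 else c ⟨i.1 - 1, Nat.lt_of_le_of_lt (Nat.sub_le _ _) i.2⟩

/-- the condition `c i > b i` and `c i > c (i-1) + 1`. -/
def Good {m : ℕ} (b c : Fin m → ℕ) (i : Fin m) : Prop :=
  b i < c i ∧ prev c i + 1 < c i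

/-- `c` is join-irreducible in `Γ(X;γ)`: it covers exactly one element. -/
def JoinIrr (n m : ℕ) (b : Fin m → ℕ) (c : ↥(GammaF n m b)) : Prop :=
  ∃! y : ↥(GammaF n m b), y ⋖ c

/-- the poset of join-irreducible elements of `Γ(X;γ)`. -/
def JP (n m : ℕ) (b : Fin m → ℕ) : Set ↥(GammaF n m b) := {c | JoinIrr n m b c}

/-- the map φ, computed at index `i` (0-based; 1-based index is `i+1`). -/
def phi (n m : ℕ) (c : Fin m → ℕ) (i : Fin m) : ℕ × ℕ :=
  (n - c i - (m - 1 - i.1), i.1)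

/-- the image of φ on the join-irreducible elements. -/
def PhiIm (n m : ℕ) (b : Fin m → ℕ) : Set (ℕ × ℕ) :=
  {pq | ∃ c : ↥(GammaF n m b), ∃ i : Fin m,
    JoinIrr n m b c ∧ Good b (c : Fin m → ℕ) i ∧ phi n m (c : Fin m → ℕ) i = pq}

/-! A cover of `c` in `Γ(X;γ)` lowers a single entry `c i` by one, and this is possible exactly at
the indices where `Good b c i` holds; so `c` is join-irreducible iff it has exactly one good index
`i`. At every other index `k`, failure of goodness says `c k = max (b k) (c (k-1) + 1)`, so `c` is
determined by `i` and `v = c i`: it is `jiTuple b i v`, the least element of `Γ(X;γ)` whose `i`-th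
entry is at least `v`. Thus join-irreducibles correspond to the pairs `(i, v)` with
`b i < v ≤ n - (m - 1 - i)`, which `φ` reads off, and comparing least elements gives
`jiTuple b i v ≤ jiTuple b j w ↔ j ≤ i ∧ v ≤ w + (i - j)`, the reversed product order on `φ`. -/

section

open Function

variable {n m : ℕ} {b : Fin m → ℕ}

lemma StrictMono.add_sub_le {c : Fin m → ℕ} (hc : StrictMono c) {k l : Fin m} (hkl : k ≤ l) :
    c k + ((l : ℕ) - k) ≤ c l := by
  obtain ⟨l, hl⟩ := l
  change (k : ℕ) ≤ l at hkl
  revert hl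
  induction l, hkl using Nat.le_induction with
  | base => simp
  | succ l hkl ih =>
    intro hl
    have := hc (Fin.mk_lt_mk.2 l.lt_succ_self : (⟨l, by omega⟩ : Fin m) < ⟨l + 1, hl⟩)
    have := ih (by omega)
    simp only at this ⊢
    omega

lemma IsTup.add_le {c : Fin m → ℕ} (hc : IsTup n m c) (i : Fin m) : c i + (m - 1 - i) ≤ n := by
  have hi := i.is_lt
  have hlast :=
    hc.1.add_sub_le (show i ≤ ⟨m - 1, by omega⟩ from Fin.le_def.2 (by simp; omega))
  have := (hc.2 ⟨m - 1, by omega⟩).2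
  simp only at hlast
  omega

lemma prev_of_eq_zero (c : Fin m → ℕ) {i : Fin m} (h : (i : ℕ) = 0) : prev c i = 0 := dif_pos h

lemma prev_of_ne_zero (c : Fin m → ℕ) {i : Fin m} (h : (i : ℕ) ≠ 0) :
    prev c i = c ⟨i - 1, by omega⟩ := dif_neg h

lemma le_prev {c : Fin m → ℕ} (hc : Monotone c) {k i : Fin m} (h : k < i) : c k ≤ prev c i := by
  rw [prev_of_ne_zero c (by rw [Fin.lt_def] at h; omega)]
  exact hc (Fin.le_def.2 (by rw [Fin.lt_def] at h; simp; omega))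

lemma prev_lt {c : Fin m → ℕ} (hc : IsTup n m c) (i : Fin m) : prev c i < c i := by
  by_cases h : (i : ℕ) = 0
  · rw [prev_of_eq_zero c h]
    exact (hc.2 i).1
  · rw [prev_of_ne_zero c h]
    exact hc.1 (Fin.lt_def.2 (by simp; omega))

lemma prev_congr {c d : Fin m → ℕ} {k : Fin m} (h : ∀ j < k, c j = d j) :
    prev c k = prev d k := by
  unfold prev
  split
  · rfl
  · exact h _ (Fin.lt_def.2 (by simp; omega))

lemma update_mem_of_good {c : Fin m → ℕ} (hc : c ∈ GammaF n m b) {i : Fin m}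
    (hi : Good b c i) : update c i (c i - 1) ∈ GammaF n m b := by
  obtain ⟨⟨hmono, hrange⟩, hbc⟩ := hc
  refine ⟨⟨fun k l hkl => ?_, fun k => ?_⟩, fun k => ?_⟩
  · rcases eq_or_ne l i with rfl | hl
    · have := le_prev hmono.monotone hkl
      rw [update_of_ne hkl.ne, update_self]
      have := hi.2
      omega
    · have := hmono hkl
      rw [update_of_ne hl]
      rcases eq_or_ne k i with rfl | hk
      · rw [update_self]
        omega
      · rwa [update_of_ne hk]
  · rcases eq_or_ne k i with rfl | hk
    · rw [update_self]
      have := hrange k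
      have := hi.2
      omega
    · rw [update_of_ne hk]
      exact hrange k
  · rcases eq_or_ne k i with rfl | hk
    · rw [update_self]
      exact Nat.le_sub_one_of_lt hi.1
    · rw [update_of_ne hk]
      exact hbc k

lemma update_covBy {c : GammaF n m b} {i : Fin m} (hi : Good b c i) :
    (⟨update c i ((c : Fin m → ℕ) i - 1), update_mem_of_good c.2 hi⟩ : GammaF n m b) ⋖ c := by
  apply CovBy.of_image (OrderEmbedding.subtype _)
  refine Pi.covBy_iff.2 ⟨i, ?_, fun j hj => update_of_ne hj _ _⟩
  have := hi.2
  simp only [OrderEmbedding.subtype_apply, update_self, Nat.covBy_iff_add_one_eq]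
  omega

lemma exists_good_le_update {y c : Fin m → ℕ} (hy : y ∈ GammaF n m b) (hyc : y < c) :
    ∃ i, Good b c i ∧ y ≤ update c i (c i - 1) := by
  obtain ⟨j, hj : y j < c j, hmin⟩ :=
    wellFounded_lt.has_min {k | y k < c k} (Pi.lt_def.1 hyc).2
  have hagree : ∀ k < j, y k = c k :=
    fun k hk => (hyc.le k).antisymm (not_lt.1 fun h => hmin k h hk)
  have hprev := prev_lt hy.1 j
  have hbj := hy.2 j
  rw [prev_congr hagree] at hprev
  refine ⟨j, ⟨hbj.trans_lt hj, ?_⟩, fun k => ?_⟩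
  · omega
  · rcases eq_or_ne k j with rfl | hk
    · rw [update_self]
      exact Nat.le_sub_one_of_lt hj
    · rw [update_of_ne hk]
      exact hyc.le k

lemma covBy_iff_exists_good {y c : GammaF n m b} :
    y ⋖ c ↔ ∃ i, Good b c i ∧ (y : Fin m → ℕ) = update c i ((c : Fin m → ℕ) i - 1) := by
  constructor
  · intro h
    obtain ⟨i, hi, hle⟩ := exists_good_le_update y.2 h.lt
    have hle' : y ≤ ⟨_, update_mem_of_good c.2 hi⟩ := hle
    exact ⟨i, hi, congrArg Subtype.val
      (hle'.eq_of_not_lt fun hlt => h.2 hlt (update_covBy hi).lt)⟩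
  · rintro ⟨i, hi, hy⟩
    rw [show y = ⟨_, update_mem_of_good c.2 hi⟩ from Subtype.ext hy]
    exact update_covBy hi

lemma eq_of_update_eq {c : Fin m → ℕ} {i j : Fin m} (hj : Good b c j)
    (h : update c j (c j - 1) = update c i (c i - 1)) : j = i := by
  by_contra hne
  have := congrFun h j
  rw [update_self, update_of_ne hne] at this
  have := hj.2
  omega

lemma joinIrr_iff_existsUnique_good {c : GammaF n m b} :
    JoinIrr n m b c ↔ ∃! i, Good b c i := by
  constructor
  · rintro ⟨y, hy, huniq⟩
    obtain ⟨i, hi, hyi⟩ := covBy_iff_exists_good.1 hy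
    refine ⟨i, hi, fun j hj => eq_of_update_eq hj ?_⟩
    rw [← hyi, ← huniq _ (update_covBy hj)]
  · rintro ⟨i, hi, huniq⟩
    refine ⟨_, update_covBy hi, fun y hy => ?_⟩
    obtain ⟨j, hj, hyj⟩ := covBy_iff_exists_good.1 hy
    obtain rfl := huniq j hj
    exact Subtype.ext hyj

lemma not_good_iff {c : Fin m → ℕ} (hc : c ∈ GammaF n m b) (k : Fin m) :
    ¬ Good b c k ↔ c k = max (b k) (prev c k + 1) := by
  have : b k ≤ c k := hc.2 k
  have := prev_lt hc.1 k
  unfold Good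
  omega

lemma eq_of_eq_max_prev {c d : Fin m → ℕ} {i : Fin m} (hi : c i = d i)
    (hc : ∀ k ≠ i, c k = max (b k) (prev c k + 1))
    (hd : ∀ k ≠ i, d k = max (b k) (prev d k + 1)) : c = d := by
  funext k
  induction k using WellFoundedLT.induction with
  | _ k ih =>
    rcases eq_or_ne k i with rfl | hk
    · exact hi
    · rw [hc k hk, hd k hk, prev_congr ih]

def jiTuple (b : Fin m → ℕ) (i : Fin m) (v : ℕ) : Fin m → ℕ :=
  fun k => if (k : ℕ) < i then b k else max (b k) (v + ((k : ℕ) - i))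

variable {i : Fin m} {v : ℕ}

lemma jiTuple_self (hv : b i < v) : jiTuple b i v i = v := by
  simp only [jiTuple, lt_irrefl, if_false, Nat.sub_self, add_zero]
  omega

lemma jiTuple_mem (hb : b ∈ Gamma n m) (hv : v + (m - 1 - i) ≤ n) :
    jiTuple b i v ∈ GammaF n m b := by
  refine ⟨⟨fun k l hkl => ?_, fun k => ?_⟩, fun k => ?_⟩
  · have hbkl := hb.1 hkl
    rw [Fin.lt_def] at hkl
    simp only [jiTuple]
    split_ifs <;> omega
  · have := hb.2 k
    have := k.is_lt
    simp only [jiTuple]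
    split_ifs <;> omega
  · simp only [jiTuple]
    split_ifs <;> omega

lemma jiTuple_good (hb : b ∈ Gamma n m) (hv : b i < v) : Good b (jiTuple b i v) i := by
  refine ⟨(jiTuple_self hv).symm ▸ hv, ?_⟩
  rw [jiTuple_self hv]
  by_cases h : (i : ℕ) = 0
  · rw [prev_of_eq_zero _ h]
    have := hb.2 i
    omega
  · rw [prev_of_ne_zero _ h, jiTuple, if_pos (by simp; omega)]
    have := hb.1 (show (⟨i - 1, by omega⟩ : Fin m) < i from Fin.lt_def.2 (by simp; omega))
    omega

lemma jiTuple_eq_max_prev (hb : b ∈ Gamma n m) {k : Fin m} (hk : k ≠ i) :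
    jiTuple b i v k = max (b k) (prev (jiTuple b i v) k + 1) := by
  have hki : (k : ℕ) ≠ i := Fin.val_ne_of_ne hk
  by_cases h : (k : ℕ) = 0
  · rw [prev_of_eq_zero _ h]
    have := hb.2 k
    simp only [jiTuple]
    split_ifs <;> omega
  · rw [prev_of_ne_zero _ h]
    have := hb.1 (show (⟨k - 1, by omega⟩ : Fin m) < k from Fin.lt_def.2 (by simp; omega))
    simp only [jiTuple]
    split_ifs <;> omega

lemma joinIrr_jiTuple (hb : b ∈ Gamma n m) (hv : b i < v) (hvn : v + (m - 1 - i) ≤ n) :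
    JoinIrr n m b ⟨jiTuple b i v, jiTuple_mem hb hvn⟩ :=
  joinIrr_iff_existsUnique_good.2 ⟨i, jiTuple_good hb hv, fun _ hk =>
    not_not.1 fun hki => (not_good_iff (jiTuple_mem hb hvn) _).2 (jiTuple_eq_max_prev hb hki) hk⟩

lemma JoinIrr.eq_jiTuple (hb : b ∈ Gamma n m) {c : GammaF n m b} (hc : JoinIrr n m b c)
    (hi : Good b c i) : (c : Fin m → ℕ) = jiTuple b i ((c : Fin m → ℕ) i) := by
  obtain ⟨_, _, huniq⟩ := joinIrr_iff_existsUnique_good.1 hc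
  refine eq_of_eq_max_prev (jiTuple_self hi.1).symm (fun k hk => ?_)
    fun k hk => jiTuple_eq_max_prev hb hk
  exact (not_good_iff c.2 k).1 fun hg => hk ((huniq k hg).trans (huniq i hi).symm)

lemma jiTuple_le_iff {d : Fin m → ℕ} (hv : b i < v) (hd : d ∈ GammaF n m b) :
    jiTuple b i v ≤ d ↔ v ≤ d i := by
  refine ⟨fun h => jiTuple_self hv ▸ h i, fun h k => ?_⟩
  have : b k ≤ d k := hd.2 k
  simp only [jiTuple]
  split_ifs with hki
  · exact this
  · have := hd.1.1.add_sub_le (show i ≤ k from Fin.le_def.2 (by omega))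
    omega

lemma JoinIrr.eq_of_phi_eq (hb : b ∈ Gamma n m) {c d : GammaF n m b} {i j : Fin m}
    (hc : JoinIrr n m b c) (hd : JoinIrr n m b d) (hci : Good b c i) (hdj : Good b d j)
    (h : phi n m c i = phi n m d j) : c = d := by
  obtain rfl : i = j := Fin.ext (congrArg Prod.snd h)
  have hval : (c : Fin m → ℕ) i = (d : Fin m → ℕ) i := by
    have := congrArg Prod.fst h
    have := c.2.1.add_le i
    have := d.2.1.add_le i
    simp only [phi] at *
    omega
  exact Subtype.ext <| by rw [hc.eq_jiTuple hb hci, hd.eq_jiTuple hb hdj, hval]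

lemma JoinIrr.le_iff_phi_le (hb : b ∈ Gamma n m) {c d : GammaF n m b} {i j : Fin m}
    (hc : JoinIrr n m b c) (hd : JoinIrr n m b d) (hci : Good b c i) (hdj : Good b d j) :
    c ≤ d ↔ phi n m d j ≤ phi n m c i := by
  calc c ≤ d ↔ jiTuple b i ((c : Fin m → ℕ) i) ≤ d := by rw [← hc.eq_jiTuple hb hci]; rfl
    _ ↔ (c : Fin m → ℕ) i ≤ (d : Fin m → ℕ) i := jiTuple_le_iff hci.1 d.2
    _ ↔ (c : Fin m → ℕ) i ≤ jiTuple b j ((d : Fin m → ℕ) j) i := by rw [← hd.eq_jiTuple hb hdj]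
    _ ↔ phi n m d j ≤ phi n m c i := by
      have := c.2.1.add_le i
      have := d.2.1.add_le j
      have := hci.1
      have := hdj.1
      have := i.is_lt
      have := j.is_lt
      simp only [jiTuple, phi, Prod.mk_le_mk]
      split_ifs <;> omega

lemma mem_phiIm_iff (hb : b ∈ Gamma n m) {p q : ℕ} :
    (p, q) ∈ PhiIm n m b ↔ ∃ i : Fin m, (i : ℕ) = q ∧ b i + p + (m - 1 - i) < n := by
  constructor
  · rintro ⟨c, i, -, hci, hphi⟩
    simp only [phi, Prod.ext_iff] at hphi
    have := c.2.1.add_le i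
    have := hci.1
    exact ⟨i, hphi.2, by omega⟩
  · rintro ⟨i, rfl, h⟩
    have hv : b i < n - p - (m - 1 - i) := by omega
    have hvn : n - p - (m - 1 - i) + (m - 1 - i) ≤ n := by omega
    refine ⟨_, i, joinIrr_jiTuple hb hv hvn, jiTuple_good hb hv, Prod.ext ?_ rfl⟩
    simp only [phi, jiTuple_self hv]
    omega

lemma mem_phiIm_of_le (hb : b ∈ Gamma n m) {p q p' q' : ℕ} (h : (p, q) ∈ PhiIm n m b)
    (hp : p' ≤ p) (hq : q' ≤ q) : (p', q') ∈ PhiIm n m b := by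
  obtain ⟨i, rfl, h⟩ := (mem_phiIm_iff hb).1 h
  have hi := i.is_lt
  have := hb.1.add_sub_le (show ⟨q', by omega⟩ ≤ i from Fin.le_def.2 hq)
  exact (mem_phiIm_iff hb).2 ⟨⟨q', by omega⟩, rfl, by simp only at this ⊢; omega⟩

lemma phiIm_finite (hb : b ∈ Gamma n m) : (PhiIm n m b).Finite := by
  refine ((Set.finite_Iio n).prod (Set.finite_Iio m)).subset fun ⟨p, q⟩ h => ?_
  obtain ⟨i, rfl, h⟩ := (mem_phiIm_iff hb).1 h
  exact ⟨Set.mem_Iio.2 (by omega), Set.mem_Iio.2 i.is_lt⟩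

noncomputable def JoinIrr.goodIndex {c : GammaF n m b} (hc : JoinIrr n m b c) : Fin m :=
  (joinIrr_iff_existsUnique_good.1 hc).exists.choose

lemma JoinIrr.good_goodIndex {c : GammaF n m b} (hc : JoinIrr n m b c) :
    Good b c hc.goodIndex :=
  (joinIrr_iff_existsUnique_good.1 hc).exists.choose_spec

noncomputable def jpOrderIsoPhiIm (hb : b ∈ Gamma n m) :
    JP n m b ≃o OrderDual.toDual '' PhiIm n m b :=
  OrderIso.ofSurjective
    (OrderEmbedding.ofMapLEIff
      (fun x => ⟨OrderDual.toDual (phi n m x.1 x.2.goodIndex),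
        _, ⟨x.1, _, x.2, x.2.good_goodIndex, rfl⟩, rfl⟩)
      fun x y => (JoinIrr.le_iff_phi_le hb x.2 y.2 x.2.good_goodIndex y.2.good_goodIndex).symm)
    (by
      rintro ⟨_, _, ⟨c, i, hc, hci, rfl⟩, rfl⟩
      obtain rfl := (joinIrr_iff_existsUnique_good.1 hc).unique hc.good_goodIndex hci
      exact ⟨⟨c, hc⟩, rfl⟩)

end

theorem stmt5_general (n m : ℕ) (b : Fin m → ℕ)
    (hb : b ∈ Gamma n m) :
    (∀ c d : ↥(GammaF n m b), ∀ i j : Fin m,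
      JoinIrr n m b c → JoinIrr n m b d →
      Good b (c : Fin m → ℕ) i → Good b (d : Fin m → ℕ) j →
      phi n m (c : Fin m → ℕ) i = phi n m (d : Fin m → ℕ) j → c = d) ∧
    (∀ p q p' q' : ℕ, (p, q) ∈ PhiIm n m b → p' ≤ p → q' ≤ q →
      (p', q') ∈ PhiIm n m b) ∧
    (PhiIm n m b).Finite ∧
    Nonempty (↥(JP n m b) ≃o ↥(OrderDual.toDual '' PhiIm n m b)) :=
  ⟨fun _ _ _ _ hc hd => hc.eq_of_phi_eq hb hd, fun _ _ _ _ => mem_phiIm_of_le hb,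
    phiIm_finite hb, ⟨jpOrderIsoPhiIm hb⟩⟩

theorem stmt5 (n m : ℕ) (hm : 1 ≤ m) (hmn : m ≤ n) (b : Fin m → ℕ)
    (hb : b ∈ Gamma n m) :
    (∀ c d : ↥(GammaF n m b), ∀ i j : Fin m,
      JoinIrr n m b c → JoinIrr n m b d →
      Good b (c : Fin m → ℕ) i → Good b (d : Fin m → ℕ) j →
      phi n m (c : Fin m → ℕ) i = phi n m (d : Fin m → ℕ) j → c = d) ∧
    (∀ p q p' q' : ℕ, (p, q) ∈ PhiIm n m b → p' ≤ p → q' ≤ q →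
      (p', q') ∈ PhiIm n m b) ∧
    (PhiIm n m b).Finite ∧
    Nonempty (↥(JP n m b) ≃o ↥(OrderDual.toDual '' PhiIm n m b)) :=
  stmt5_general n m b hb
end

section
/- The poset P of join-irreducible elements of Γ(X;γ) is pure (all maximal chains have the same length, equivalently all minimal elements have the same coheight) if and only if b_{l_i} - 2 l_i is constant for i = 1,...,u. -/
def GapIdx (n m : ℕ) (b : Fin m → ℕ) (l : Fin m) : Prop :=
  b l < n ∧ ∀ j : Fin m, j.1 = l.1 + 1 → b l + 1 < b j

section Aux
variable {n m : ℕ} {b : Fin m → ℕ}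

lemma sm_add (hb : StrictMono b) : ∀ (d : ℕ) (i j : Fin m), i.1 + d = j.1 → b i + d ≤ b j := by
  intro d
  induction d with
  | zero =>
    intro i j h
    have : i = j := Fin.ext (by omega)
    subst this; omega
  | succ d ih =>
    intro i j h
    have hj' : i.1 + d < m := by omega
    have h1 := ih i ⟨i.1 + d, hj'⟩ rfl
    have h2 : (⟨i.1 + d, hj'⟩ : Fin m) < j := by
      simp only [Fin.lt_def]; omega
    have := hb h2
    omega

lemma b_lb (hb : b ∈ Gamma n m) (i : Fin m) : i.1 + 1 ≤ b i := by
  have h0 : (0 : ℕ) < m := i.pos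
  have h1 := sm_add hb.1 i.1 ⟨0, h0⟩ i (by simp)
  have h2 := (hb.2 ⟨0, h0⟩).1
  omega

lemma b_ub (hb : b ∈ Gamma n m) (i : Fin m) : b i + (m - 1 - i.1) ≤ n := by
  have hlast : m - 1 < m := by have := i.pos; omega
  have h1 := sm_add hb.1 (m - 1 - i.1) i ⟨m - 1, hlast⟩ (by simp only [Fin.val_mk]; omega)
  have h2 := (hb.2 ⟨m - 1, hlast⟩).2
  omega

/-- the canonical join-irreducible with good index `i` and value `v`. -/
def tup (b : Fin m → ℕ) (i : Fin m) (v : ℕ) : Fin m → ℕ :=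
  fun j => if j.1 < i.1 then b j else max (b j) (v + j.1 - i.1)

/-- `(i, v)` is a valid parameter pair. -/
def InS (n : ℕ) (b : Fin m → ℕ) (i : Fin m) (v : ℕ) : Prop :=
  b i < v ∧ v + (m - 1) ≤ n + i.1

lemma tup_lt (h : b i < v) : tup b i v i = v := by
  simp only [tup, Nat.lt_irrefl, if_false]
  omega

lemma tup_ge (i : Fin m) (v : ℕ) (j : Fin m) : b j ≤ tup b i v j := by
  unfold tup; split <;> simp

lemma tup_lt_of_lt (hj : j.1 < i.1) : tup b i v j = b j := by
  simp [tup, hj]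

lemma tup_of_ge (hj : i.1 ≤ j.1) : tup b i v j = max (b j) (v + j.1 - i.1) := by
  simp [tup, Nat.not_lt.mpr hj]

lemma tup_mem (hb : b ∈ Gamma n m) {i : Fin m} {v : ℕ} (h : InS n b i v) :
    tup b i v ∈ GammaF n m b := by
  obtain ⟨hv, hvn⟩ := h
  refine ⟨⟨?_, ?_⟩, fun j => tup_ge i v j⟩
  · intro j k hjk
    have hbjk := hb.1 hjk
    rcases Nat.lt_or_ge j.1 i.1 with hj | hj
    · rw [tup_lt_of_lt hj]
      rcases Nat.lt_or_ge k.1 i.1 with hk | hk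
      · rw [tup_lt_of_lt hk]; exact hbjk
      · rw [tup_of_ge hk]; exact lt_of_lt_of_le hbjk (le_max_left _ _)
    · have hk : i.1 ≤ k.1 := le_trans hj (le_of_lt hjk)
      rw [tup_of_ge hj, tup_of_ge hk]
      have hjk' : j.1 < k.1 := hjk
      exact max_lt_max hbjk (by omega)
  · intro j
    constructor
    · exact le_trans (hb.2 j).1 (tup_ge i v j)
    · rcases Nat.lt_or_ge j.1 i.1 with hj | hj
      · rw [tup_lt_of_lt hj]; exact (hb.2 j).2
      · rw [tup_of_ge hj]
        have h1 := (hb.2 j).2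
        have h2 : j.1 ≤ m - 1 := by omega
        exact max_le h1 (by omega)

end Aux
section Aux2
variable {n m : ℕ} {b : Fin m → ℕ}

lemma prev_zero {c : Fin m → ℕ} {j : Fin m} (h : j.1 = 0) : prev c j = 0 := by
  simp [prev, h]

lemma prev_pos {c : Fin m → ℕ} {j : Fin m} (h : j.1 ≠ 0) :
    prev c j = c ⟨j.1 - 1, Nat.lt_of_le_of_lt (Nat.sub_le _ _) j.2⟩ := by
  simp [prev, h]

lemma sle_iff {x y : ↥(GammaF n m b)} : x ≤ y ↔ ∀ j, x.1 j ≤ y.1 j := by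
  rw [← Subtype.coe_le_coe]; exact Pi.le_def

lemma seq_iff {x y : ↥(GammaF n m b)} : x = y ↔ ∀ j, x.1 j = y.1 j := by
  rw [Subtype.ext_iff, funext_iff]

lemma good_tup (hb : b ∈ Gamma n m) {i : Fin m} {v : ℕ} (h : InS n b i v) (j : Fin m) :
    Good b (tup b i v) j ↔ j = i := by
  constructor
  · intro hg
    rcases lt_trichotomy j.1 i.1 with hj | hj | hj
    · exfalso
      have := hg.1
      rw [tup_lt_of_lt hj] at this
      omega
    · exact Fin.ext hj
    · exfalso
      have h1 := hg.1
      have h2 := hg.2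
      rw [tup_of_ge (le_of_lt hj)] at h1 h2
      have hj0 : j.1 ≠ 0 := by omega
      rw [prev_pos hj0] at h2
      have hij : i.1 ≤ j.1 - 1 := by omega
      rw [tup_of_ge hij] at h2
      simp only [Fin.val_mk] at h2
      have hbi := b_lb hb i
      have hbj := sm_add hb.1 (j.1 - 1 - i.1) i ⟨j.1 - 1, Nat.lt_of_le_of_lt (Nat.sub_le _ _) j.2⟩
        (by simp only [Fin.val_mk]; omega)
      omega
  · rintro rfl
    have hv := h.1
    constructor
    · rw [tup_lt hv]; exact hv
    · rw [tup_lt hv]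
      rcases Nat.eq_zero_or_pos j.1 with hj0 | hj0
      · rw [prev_zero hj0]
        have := b_lb hb j
        omega
      · rw [prev_pos (by omega)]
        rw [tup_lt_of_lt (by simp only [Fin.val_mk]; omega)]
        have := sm_add hb.1 1 ⟨j.1 - 1, Nat.lt_of_le_of_lt (Nat.sub_le _ _) j.2⟩ j
          (by simp only [Fin.val_mk]; omega)
        omega

lemma dec_mem (hb : b ∈ Gamma n m) (c : ↥(GammaF n m b)) (i : Fin m) (hg : Good b c.1 i) :
    (fun j => if j = i then c.1 i - 1 else c.1 j) ∈ GammaF n m b := by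
  have hsm : StrictMono c.1 := c.2.1.1
  have hbnd := c.2.1.2
  have hbc := c.2.2
  have hci : 2 ≤ c.1 i := by have := hg.2; omega
  refine ⟨⟨?_, ?_⟩, ?_⟩
  · intro j k hjk
    show (if j = i then c.1 i - 1 else c.1 j) < (if k = i then c.1 i - 1 else c.1 k)
    have hck := hsm hjk
    have hjk' : j.1 < k.1 := hjk
    by_cases hji : j = i
    · have hki : ¬ k = i := by intro h; rw [hji, h] at hjk'; omega
      rw [if_pos hji, if_neg hki]
      have := hsm (show i < k by rw [← hji]; exact hjk)
      omega
    · by_cases hki : k = i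
      · rw [if_neg hji, if_pos hki]
        have hi0 : i.1 ≠ 0 := by rw [hki] at hjk'; omega
        have hp := hg.2
        rw [prev_pos hi0] at hp
        have hcm : c.1 j ≤ c.1 ⟨i.1 - 1, Nat.lt_of_le_of_lt (Nat.sub_le _ _) i.2⟩ := by
          rcases Nat.lt_or_ge j.1 (i.1 - 1) with h | h
          · exact le_of_lt (hsm (by simp only [Fin.lt_def, Fin.val_mk]; omega))
          · have : j = (⟨i.1 - 1, Nat.lt_of_le_of_lt (Nat.sub_le _ _) i.2⟩ : Fin m) :=
              Fin.ext (by simp only [Fin.val_mk]; rw [hki] at hjk'; omega)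
            rw [this]
        omega
      · rw [if_neg hji, if_neg hki]
        exact hck
  · intro j
    show 1 ≤ (if j = i then c.1 i - 1 else c.1 j) ∧ (if j = i then c.1 i - 1 else c.1 j) ≤ n
    by_cases hji : j = i
    · rw [if_pos hji]
      have h1 := hbc i
      have h2 := (hbnd i).2
      have h3 := (hb.2 i).1
      constructor <;> omega
    · rw [if_neg hji]; exact hbnd j
  · intro j
    show b j ≤ (if j = i then c.1 i - 1 else c.1 j)
    by_cases hji : j = i
    · rw [if_pos hji, hji]
      have h1 := hbc i
      have h2 := hg.1
      omega
    · rw [if_neg hji]; exact hbc j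

lemma covby_iff (hb : b ∈ Gamma n m) (y c : ↥(GammaF n m b)) :
    y ⋖ c ↔ ∃ i : Fin m, Good b c.1 i ∧ ∀ j, y.1 j = if j = i then c.1 i - 1 else c.1 j := by
  have hsmc : StrictMono c.1 := c.2.1.1
  have hsmy : StrictMono y.1 := y.2.1.1
  constructor
  · rintro ⟨hlt, hcov⟩
    have hle : ∀ j, y.1 j ≤ c.1 j := sle_iff.mp hlt.le
    have hne : y ≠ c := hlt.ne
    classical
    have hex : ∃ k : ℕ, ∃ hk : k < m, y.1 ⟨k, hk⟩ < c.1 ⟨k, hk⟩ := by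
      by_contra hcon
      push_neg at hcon
      apply hne
      apply seq_iff.mpr
      intro j
      have := hcon j.1 j.2
      rw [Fin.eta] at this
      exact le_antisymm (hle j) this
    obtain ⟨k0, hk0, hyk, hmin0⟩ : ∃ k0, ∃ hk0 : k0 < m,
        y.1 ⟨k0, hk0⟩ < c.1 ⟨k0, hk0⟩ ∧ ∀ j : Fin m, j.1 < k0 → y.1 j = c.1 j := by
      obtain ⟨hk0, hs⟩ := Nat.find_spec hex
      refine ⟨Nat.find hex, hk0, hs, ?_⟩
      intro j hj
      have h2 := Nat.find_min hex hj
      push_neg at h2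
      have h3 := h2 j.2
      rw [Fin.eta] at h3
      exact le_antisymm (hle j) h3
    have hgood : Good b c.1 ⟨k0, hk0⟩ := by
      constructor
      · have h1 := y.2.2 ⟨k0, hk0⟩
        have h2 : b ⟨k0, hk0⟩ ≤ y.1 ⟨k0, hk0⟩ := h1
        omega
      · rcases Nat.eq_zero_or_pos k0 with h0 | h0
        · rw [prev_zero (by simp only [Fin.val_mk]; omega)]
          have h1 := (y.2.1.2 ⟨k0, hk0⟩).1
          omega
        · rw [prev_pos (by simp only [Fin.val_mk]; omega)]
          simp only [Fin.val_mk]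
          have h1 : y.1 ⟨k0 - 1, by omega⟩ = c.1 ⟨k0 - 1, by omega⟩ :=
            hmin0 _ (by simp only [Fin.val_mk]; omega)
          have h2 : y.1 ⟨k0 - 1, by omega⟩ < y.1 ⟨k0, hk0⟩ :=
            hsmy (by simp only [Fin.lt_def, Fin.val_mk]; omega)
          omega
    refine ⟨⟨k0, hk0⟩, hgood, ?_⟩
    have hzmem := dec_mem hb c ⟨k0, hk0⟩ hgood
    have hyz : y ≤ (⟨_, hzmem⟩ : ↥(GammaF n m b)) := by
      apply sle_iff.mpr
      intro j
      show y.1 j ≤ if j = ⟨k0, hk0⟩ then c.1 ⟨k0, hk0⟩ - 1 else c.1 j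
      by_cases hji : j = ⟨k0, hk0⟩
      · rw [if_pos hji, hji]; omega
      · rw [if_neg hji]; exact hle j
    have hzc : (⟨_, hzmem⟩ : ↥(GammaF n m b)) < c := by
      apply lt_of_le_of_ne
      · apply sle_iff.mpr
        intro j
        show (if j = ⟨k0, hk0⟩ then c.1 ⟨k0, hk0⟩ - 1 else c.1 j) ≤ c.1 j
        by_cases hji : j = ⟨k0, hk0⟩
        · rw [if_pos hji, hji]; omega
        · rw [if_neg hji]
      · intro h
        have h7 := seq_iff.mp h ⟨k0, hk0⟩
        have h8 : (if (⟨k0, hk0⟩ : Fin m) = ⟨k0, hk0⟩ then c.1 ⟨k0, hk0⟩ - 1 else c.1 ⟨k0, hk0⟩)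
            = c.1 ⟨k0, hk0⟩ := h7
        rw [if_pos rfl] at h8
        have hci2 : 2 ≤ c.1 ⟨k0, hk0⟩ := by have := hgood.2; omega
        omega
    have heq : y = (⟨_, hzmem⟩ : ↥(GammaF n m b)) := by
      by_contra hne2
      exact hcov (lt_of_le_of_ne hyz hne2) hzc
    intro j
    exact seq_iff.mp heq j
  · rintro ⟨i, hgood, hy⟩
    have hci : 2 ≤ c.1 i := by have := hgood.2; omega
    have hle : y ≤ c := by
      apply sle_iff.mpr
      intro j
      rw [hy j]
      by_cases hji : j = i
      · rw [if_pos hji, hji]; omega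
      · rw [if_neg hji]
    have hlt : y < c := by
      refine lt_of_le_of_ne hle ?_
      intro h
      have := seq_iff.mp h i
      rw [hy i, if_pos rfl] at this
      omega
    refine ⟨hlt, ?_⟩
    intro z hyz hzc
    have hyzle : ∀ j, y.1 j ≤ z.1 j := sle_iff.mp hyz.le
    have hzcle : ∀ j, z.1 j ≤ c.1 j := sle_iff.mp hzc.le
    have h1 : ∀ j, j ≠ i → z.1 j = c.1 j := by
      intro j hji
      have h2 := hyzle j
      rw [hy j, if_neg hji] at h2
      exact le_antisymm (hzcle j) h2
    have h4 : c.1 i - 1 ≤ z.1 i := by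
      have := hyzle i
      rw [hy i, if_pos rfl] at this
      exact this
    have h5 : z.1 i ≤ c.1 i := hzcle i
    rcases Nat.lt_or_ge (z.1 i) (c.1 i) with h6 | h6
    · have : y = z := by
        apply seq_iff.mpr
        intro j
        rw [hy j]
        by_cases hji : j = i
        · rw [if_pos hji, hji]; omega
        · rw [if_neg hji]; exact (h1 j hji).symm
      rw [this] at hyz
      exact absurd hyz (lt_irrefl _)
    · have : z = c := by
        apply seq_iff.mpr
        intro j
        by_cases hji : j = i
        · rw [hji]; omega
        · exact h1 j hji
      rw [this] at hzc
      exact absurd hzc (lt_irrefl _)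

end Aux2
section Aux3
variable {n m : ℕ} {b : Fin m → ℕ}

lemma joinIrr_iff (hb : b ∈ Gamma n m) (c : ↥(GammaF n m b)) :
    JoinIrr n m b c ↔ ∃! i, Good b c.1 i := by
  constructor
  · rintro ⟨y, hy, hyu⟩
    obtain ⟨i, hgi, hyi⟩ := (covby_iff hb y c).mp hy
    refine ⟨i, hgi, ?_⟩
    intro i' hgi'
    have hmem := dec_mem hb c i' hgi'
    have hcov : (⟨_, hmem⟩ : ↥(GammaF n m b)) ⋖ c :=
      (covby_iff hb _ c).mpr ⟨i', hgi', fun j => rfl⟩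
    have heq := hyu _ hcov
    have h2 := seq_iff.mp heq i'
    have h3 : (if i' = i' then c.1 i' - 1 else c.1 i') = y.1 i' := h2
    rw [if_pos rfl] at h3
    by_contra hne
    have h4 := hyi i'
    rw [if_neg hne] at h4
    have hci : 2 ≤ c.1 i' := by have := hgi'.2; omega
    omega
  · rintro ⟨i, hgi, hgu⟩
    have hmem := dec_mem hb c i hgi
    refine ⟨⟨_, hmem⟩, (covby_iff hb _ c).mpr ⟨i, hgi, fun j => rfl⟩, ?_⟩
    intro y hy
    obtain ⟨i', hgi', hyi⟩ := (covby_iff hb y c).mp hy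
    have hii : i' = i := hgu i' hgi'
    apply seq_iff.mpr
    intro j
    rw [hyi j, hii]

lemma mem_JP_iff (hb : b ∈ Gamma n m) (c : ↥(GammaF n m b)) :
    c ∈ JP n m b ↔ ∃ (i : Fin m) (v : ℕ), InS n b i v ∧ c.1 = tup b i v := by
  have hmem : c ∈ JP n m b ↔ JoinIrr n m b c := Iff.rfl
  rw [hmem, joinIrr_iff hb]
  constructor
  · rintro ⟨i, hgi, hgu⟩
    have hsm : StrictMono c.1 := c.2.1.1
    have hbc : ∀ j, b j ≤ c.1 j := c.2.2
    have hbnd := c.2.1.2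
    have hmpos : 0 < m := i.pos
    have hng : ∀ j : Fin m, j ≠ i → b j < c.1 j → c.1 j ≤ prev c.1 j + 1 := by
      intro j hne hlt
      by_contra hc2
      exact hne (hgu j ⟨hlt, by omega⟩)
    refine ⟨i, c.1 i, ⟨hgi.1, ?_⟩, ?_⟩
    · have h1 := sm_add hsm (m - 1 - i.1) i ⟨m - 1, by omega⟩
        (by simp only [Fin.val_mk]; have := i.2; omega)
      have h2 := (hbnd ⟨m - 1, by omega⟩).2
      have h3 : i.1 ≤ m - 1 := by have := i.2; omega
      omega
    · have claim1 : ∀ k, ∀ j : Fin m, j.1 = k → j.1 < i.1 → c.1 j = b j := by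
        intro k
        induction k with
        | zero =>
          intro j hj0 hji
          have hne : j ≠ i := by intro h; rw [h] at hji; omega
          have h1 := hbc j
          have h2 := (hb.2 j).1
          rcases Nat.lt_or_ge (b j) (c.1 j) with h | h
          · have h3 := hng j hne h
            rw [prev_zero hj0] at h3
            omega
          · omega
        | succ k ih =>
          intro j hjk hji
          have hne : j ≠ i := by intro h; rw [h] at hji; omega
          have hj0 : j.1 ≠ 0 := by omega
          set j' : Fin m := ⟨j.1 - 1, Nat.lt_of_le_of_lt (Nat.sub_le _ _) j.2⟩ with hj'
          have ih' : c.1 j' = b j' := ih j' (by simp [hj']; omega) (by simp [hj']; omega)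
          have hb1 := sm_add hb.1 1 j' j (by simp [hj']; omega)
          have h1 := hbc j
          rcases Nat.lt_or_ge (b j) (c.1 j) with h | h
          · have h3 := hng j hne h
            rw [prev_pos hj0, ← hj'] at h3
            omega
          · omega
      have claim2 : ∀ k, ∀ j : Fin m, j.1 = i.1 + k → c.1 j = max (b j) (c.1 i + k) := by
        intro k
        induction k with
        | zero =>
          intro j hj
          have : j = i := Fin.ext (by omega)
          rw [this]
          have := hgi.1
          omega
        | succ k ih =>
          intro j hjk
          have hne : j ≠ i := by
            intro h; rw [h] at hjk; omega
          have hj0 : j.1 ≠ 0 := by omega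
          set j' : Fin m := ⟨j.1 - 1, Nat.lt_of_le_of_lt (Nat.sub_le _ _) j.2⟩ with hj'
          have ih' : c.1 j' = max (b j') (c.1 i + k) := ih j' (by simp [hj']; omega)
          have hb1 := sm_add hb.1 1 j' j (by simp [hj']; omega)
          have hsm1 : c.1 j' < c.1 j := hsm (by simp [Fin.lt_def, hj']; omega)
          have h1 := hbc j
          rcases Nat.lt_or_ge (b j) (c.1 j) with h | h
          · have h3 := hng j hne h
            rw [prev_pos hj0, ← hj'] at h3
            omega
          · omega
      funext j
      rcases lt_trichotomy j.1 i.1 with h | h | h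
      · rw [tup_lt_of_lt h]
        exact claim1 j.1 j rfl h
      · have : j = i := Fin.ext h
        rw [this, tup_lt hgi.1]
      · rw [tup_of_ge (by omega)]
        have := claim2 (j.1 - i.1) j (by omega)
        omega
  · rintro ⟨i, v, hins, hc⟩
    refine ⟨i, ?_, ?_⟩
    · rw [hc]; exact (good_tup hb hins i).mpr rfl
    · intro j hj
      rw [hc] at hj
      exact (good_tup hb hins j).mp hj

lemma tup_le_tup (hb : b ∈ Gamma n m) {i i' : Fin m} {v v' : ℕ}
    (h : InS n b i v) (h' : InS n b i' v') :
    tup b i v ≤ tup b i' v' ↔ i'.1 ≤ i.1 ∧ v + i'.1 ≤ v' + i.1 := by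
  rw [Pi.le_def]
  constructor
  · intro hle
    have h1 := hle i
    rw [tup_lt h.1] at h1
    rcases Nat.lt_or_ge i.1 i'.1 with hii | hii
    · exfalso
      rw [tup_lt_of_lt hii] at h1
      have := h.1
      omega
    · refine ⟨hii, ?_⟩
      rw [tup_of_ge hii] at h1
      have := h.1
      omega
  · rintro ⟨hii, hvv⟩
    intro j
    rcases Nat.lt_or_ge j.1 i'.1 with hj | hj
    · rw [tup_lt_of_lt hj, tup_lt_of_lt (by omega)]
    · rw [tup_of_ge hj]
      rcases Nat.lt_or_ge j.1 i.1 with hj2 | hj2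
      · rw [tup_lt_of_lt hj2]
        exact le_max_left _ _
      · rw [tup_of_ge hj2]
        omega

lemma tup_inj (hb : b ∈ Gamma n m) {i i' : Fin m} {v v' : ℕ}
    (h : InS n b i v) (h' : InS n b i' v') (he : tup b i v = tup b i' v') :
    i = i' ∧ v = v' := by
  have h1 := (tup_le_tup hb h h').mp (le_of_eq he)
  have h2 := (tup_le_tup hb h' h).mp (le_of_eq he.symm)
  exact ⟨Fin.ext (by omega), by omega⟩

end Aux3
section Aux4
variable {n m : ℕ} {b : Fin m → ℕ}

noncomputable def rho (n m : ℕ) (b : Fin m → ℕ) (c : ↥(GammaF n m b)) : ℕ :=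
  @dite ℕ (∃ i : Fin m, Good b c.1 i) (Classical.dec _)
    (fun h => (m - 1 - h.choose.1) + (c.1 h.choose - h.choose.1)) (fun _ => 0)

lemma rho_tup (hb : b ∈ Gamma n m) {i : Fin m} {v : ℕ} (hins : InS n b i v)
    (c : ↥(GammaF n m b)) (hc : c.1 = tup b i v) :
    rho n m b c = (m - 1 - i.1) + (v - i.1) := by
  have hex : ∃ j : Fin m, Good b c.1 j :=
    ⟨i, by rw [hc]; exact (good_tup hb hins i).mpr rfl⟩
  rw [rho, dif_pos hex]
  have hch : hex.choose = i := by
    have hcs2 : Good b (tup b i v) hex.choose := by rw [← hc]; exact hex.choose_spec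
    exact (good_tup hb hins _).mp hcs2
  rw [hch, hc, tup_lt hins.1]

-- abbreviation for elements of JP built from parameters
noncomputable def jj (hb : b ∈ Gamma n m) {i : Fin m} {v : ℕ} (hins : InS n b i v) :
    ↥(JP n m b) :=
  ⟨⟨tup b i v, tup_mem hb hins⟩, (mem_JP_iff hb _).mpr ⟨i, v, hins, rfl⟩⟩

lemma jj_val (hb : b ∈ Gamma n m) {i : Fin m} {v : ℕ} (hins : InS n b i v) :
    (jj hb hins).1.1 = tup b i v := rfl

lemma jp_repr (hb : b ∈ Gamma n m) (x : ↥(JP n m b)) :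
    ∃ (i : Fin m) (v : ℕ), InS n b i v ∧ x.1.1 = tup b i v :=
  (mem_JP_iff hb x.1).mp x.2

lemma jle_iff (hb : b ∈ Gamma n m) {x y : ↥(JP n m b)} {i i' : Fin m} {v v' : ℕ}
    (hix : InS n b i v) (hx : x.1.1 = tup b i v)
    (hiy : InS n b i' v') (hy : y.1.1 = tup b i' v') :
    x ≤ y ↔ i'.1 ≤ i.1 ∧ v + i'.1 ≤ v' + i.1 := by
  rw [← Subtype.coe_le_coe, ← Subtype.coe_le_coe, hx, hy]
  exact tup_le_tup hb hix hiy

lemma jeq_iff (hb : b ∈ Gamma n m) {x y : ↥(JP n m b)} {i i' : Fin m} {v v' : ℕ}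
    (hix : InS n b i v) (hx : x.1.1 = tup b i v)
    (hiy : InS n b i' v') (hy : y.1.1 = tup b i' v') :
    x = y ↔ i = i' ∧ v = v' := by
  constructor
  · intro h
    exact tup_inj hb hix hiy (by rw [← hx, ← hy, h])
  · rintro ⟨rfl, rfl⟩
    apply Subtype.ext; apply Subtype.ext
    rw [hx, hy]

lemma rhoJ_lt (hb : b ∈ Gamma n m) {x y : ↥(JP n m b)} (hxy : x < y) :
    rho n m b x.1 < rho n m b y.1 := by
  obtain ⟨i, v, hix, hx⟩ := jp_repr hb x
  obtain ⟨i', v', hiy, hy⟩ := jp_repr hb y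
  obtain ⟨h1, h2⟩ := (jle_iff hb hix hx hiy hy).mp hxy.le
  have hne : ¬ (i = i' ∧ v = v') := by
    intro h
    exact hxy.ne ((jeq_iff hb hix hx hiy hy).mpr h)
  rw [rho_tup hb hix x.1 hx, rho_tup hb hiy y.1 hy]
  have hbl := b_lb hb i
  have hbl' := b_lb hb i'
  have hin1 := hix.1
  have hin2 := hiy.1
  have hi2 := i.2
  have hi2' := i'.2
  have hfe : i = i' ↔ i.1 = i'.1 := ⟨fun h => by rw [h], Fin.ext⟩
  rw [hfe] at hne
  omega

lemma rhoJ_le (hb : b ∈ Gamma n m) {x y : ↥(JP n m b)} (hxy : x ≤ y) :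
    rho n m b x.1 ≤ rho n m b y.1 := by
  rcases eq_or_lt_of_le hxy with h | h
  · rw [h]
  · exact le_of_lt (rhoJ_lt hb h)

lemma step_lemma (hb : b ∈ Gamma n m) {x y : ↥(JP n m b)} (hxy : x < y) :
    ∃ z : ↥(JP n m b), x < z ∧ z ≤ y ∧ rho n m b z.1 = rho n m b x.1 + 1 := by
  obtain ⟨i, v, hix, hx⟩ := jp_repr hb x
  obtain ⟨i', v', hiy, hy⟩ := jp_repr hb y
  obtain ⟨h1, h2⟩ := (jle_iff hb hix hx hiy hy).mp hxy.le
  have hne : ¬ (i = i' ∧ v = v') := by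
    intro h
    exact hxy.ne ((jeq_iff hb hix hx hiy hy).mpr h)
  have hbl := b_lb hb i
  have hbl' := b_lb hb i'
  have hfe : i = i' ↔ i.1 = i'.1 := ⟨fun h => by rw [h], Fin.ext⟩
  rw [hfe] at hne
  rcases Nat.lt_or_ge (v + i'.1) (v' + i.1) with hcase | hcase
  · -- increase v
    have hins2 : InS n b i (v + 1) := by
      refine ⟨by have := hix.1; omega, ?_⟩
      have := hiy.2
      omega
    refine ⟨jj hb hins2, ?_, ?_, ?_⟩
    · rw [lt_iff_le_and_ne]
      constructor
      · rw [jle_iff hb hix hx hins2 (jj_val hb hins2)]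
        omega
      · intro h
        have := (jeq_iff hb hix hx hins2 (jj_val hb hins2)).mp h
        omega
    · rw [jle_iff hb hins2 (jj_val hb hins2) hiy hy]
      omega
    · rw [rho_tup hb hins2 _ (jj_val hb hins2), rho_tup hb hix x.1 hx]
      have := i.2
      have := hix.1
      omega
  · -- v + i' = v' + i, so i' < i : decrease i
    have hii : i'.1 < i.1 := by omega
    have hi0 : i.1 ≠ 0 := by omega
    set i2 : Fin m := ⟨i.1 - 1, Nat.lt_of_le_of_lt (Nat.sub_le _ _) i.2⟩ with hi2def
    have hi2v : i2.1 = i.1 - 1 := rfl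
    have hb2 : b i2 + 1 ≤ b i := sm_add hb.1 1 i2 i (by omega)
    have hx1 := hix.1
    have hx2 := hix.2
    have hins2 : InS n b i2 (v - 1) := by
      constructor
      · omega
      · omega
    refine ⟨jj hb hins2, ?_, ?_, ?_⟩
    · rw [lt_iff_le_and_ne]
      constructor
      · rw [jle_iff hb hix hx hins2 (jj_val hb hins2)]
        omega
      · intro h
        have h4 := (jeq_iff hb hix hx hins2 (jj_val hb hins2)).mp h
        have h5 : i.1 = i2.1 := by rw [h4.1]
        omega
    · rw [jle_iff hb hins2 (jj_val hb hins2) hiy hy]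
      omega
    · rw [rho_tup hb hins2 _ (jj_val hb hins2), rho_tup hb hix x.1 hx]
      have := i.2
      omega

lemma exists_top (hb : b ∈ Gamma n m) (x0 : ↥(JP n m b)) :
    ∃ T : ↥(JP n m b), ∀ y : ↥(JP n m b), y ≤ T := by
  obtain ⟨i, v, hix, hx⟩ := jp_repr hb x0
  have hmpos : 0 < m := i.pos
  have hbl := b_lb hb i
  have hb0 := sm_add hb.1 i.1 ⟨0, hmpos⟩ i (by simp)
  have h00 : (⟨0, hmpos⟩ : Fin m).1 = 0 := rfl
  have hx1 := hix.1
  have hx2 := hix.2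
  have hi2 := i.2
  have hinsT : InS n b ⟨0, hmpos⟩ (n - m + 1) := by
    constructor
    · omega
    · omega
  refine ⟨jj hb hinsT, ?_⟩
  intro y
  obtain ⟨i', v', hiy, hy⟩ := jp_repr hb y
  rw [jle_iff hb hiy hy hinsT (jj_val hb hinsT)]
  have := hiy.2
  have := hiy.1
  have := b_lb hb i'
  omega

lemma min_to_gap (hb : b ∈ Gamma n m) {x : ↥(JP n m b)}
    (hmin : ∀ y : ↥(JP n m b), ¬ y < x) :
    ∃ l : Fin m, GapIdx n m b l ∧ InS n b l (b l + 1) ∧ x.1.1 = tup b l (b l + 1) := by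
  obtain ⟨i, v, hix, hx⟩ := jp_repr hb x
  have hbl := b_lb hb i
  have hveq : v = b i + 1 := by
    by_contra hv
    have hv2 : b i + 1 < v := by have := hix.1; omega
    have hins2 : InS n b i (v - 1) := ⟨by omega, by have := hix.2; omega⟩
    apply hmin (jj hb hins2)
    rw [lt_iff_le_and_ne]
    constructor
    · rw [jle_iff hb hins2 (jj_val hb hins2) hix hx]
      omega
    · intro h
      have := (jeq_iff hb hins2 (jj_val hb hins2) hix hx).mp h
      omega
  refine ⟨i, ⟨?_, ?_⟩, ?_, ?_⟩
  · have := hix.2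
    have := i.2
    omega
  · intro j hj
    by_contra hc
    have hji : b j = b i + 1 := by
      have := sm_add hb.1 1 i j (by omega)
      omega
    have hins2 : InS n b j (b j + 1) := by
      constructor
      · omega
      · have := hix.2
        omega
    apply hmin (jj hb hins2)
    rw [lt_iff_le_and_ne]
    constructor
    · rw [jle_iff hb hins2 (jj_val hb hins2) hix hx]
      omega
    · intro h
      have := (jeq_iff hb hins2 (jj_val hb hins2) hix hx).mp h
      have h5 : j.1 = i.1 := by rw [this.1]
      omega
  · rw [← hveq]; exact hix
  · rw [← hveq]; exact hx

lemma gap_to_min (hb : b ∈ Gamma n m) {l : Fin m} (hgap : GapIdx n m b l) :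
    ∃ hins : InS n b l (b l + 1), ∀ y : ↥(JP n m b), ¬ y < jj hb hins := by
  have hbl := b_lb hb l
  have hins : InS n b l (b l + 1) := by
    refine ⟨by omega, ?_⟩
    rcases Nat.lt_or_ge (l.1 + 1) m with hl | hl
    · have hgap2 := hgap.2 ⟨l.1 + 1, hl⟩ (by simp)
      have hub := b_ub hb ⟨l.1 + 1, hl⟩
      simp only [Fin.val_mk] at hgap2 hub
      omega
    · have : l.1 = m - 1 := by have := l.2; omega
      have := hgap.1
      omega
  refine ⟨hins, ?_⟩
  intro y hy
  obtain ⟨i, v, hiy, hyv⟩ := jp_repr hb y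
  obtain ⟨h1, h2⟩ := (jle_iff hb hiy hyv hins (jj_val hb hins)).mp hy.le
  have hne : ¬ (i = l ∧ v = b l + 1) := by
    intro h
    exact hy.ne ((jeq_iff hb hiy hyv hins (jj_val hb hins)).mpr h)
  have hbli := sm_add hb.1 (i.1 - l.1) l i (by omega)
  have hvi := hiy.1
  -- v > b i ≥ b l + (i - l); v + l ≤ b l + 1 + i forces equality chain
  rcases Nat.eq_or_lt_of_le h1 with hil | hil
  · -- i = l
    have hieq : i = l := (Fin.ext hil).symm
    rw [hieq] at hvi h2
    exact hne ⟨hieq, by omega⟩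
  · -- l < i : contradiction with gap
    have hl1 : l.1 + 1 < m := by have := i.2; omega
    have hgap2 := hgap.2 ⟨l.1 + 1, hl1⟩ (by simp)
    have hstep := sm_add hb.1 (i.1 - l.1 - 1) ⟨l.1 + 1, hl1⟩ i (by simp; omega)
    omega

instance gammaF_finite : Finite ↥(GammaF n m b) := by
  apply Finite.of_injective (f := fun (c : ↥(GammaF n m b)) (j : Fin m) =>
    (⟨min (c.1 j) n, by omega⟩ : Fin (n + 1)))
  intro c d h
  apply Subtype.ext
  funext j
  have h1 : min (c.1 j) n = min (d.1 j) n := congrArg Fin.val (congrFun h j)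
  have h2 := (c.2.1.2 j).2
  have h3 := (d.2.1.2 j).2
  omega

end Aux4
section Aux5
variable {n m : ℕ} {b : Fin m → ℕ}

lemma maxchain_card (hb : b ∈ Gamma n m) (T : ↥(JP n m b)) (hT : ∀ y, y ≤ T)
    (s : Set ↥(JP n m b)) (hs : IsMaxChain (· ≤ ·) s) :
    ∃ p, p ∈ s ∧ (∀ y, ¬ y < p) ∧
      s.ncard = rho n m b T.1 + 1 - rho n m b p.1 := by
  obtain ⟨hchain, hmax⟩ := hs
  have hsfin : s.Finite := Set.toFinite s
  have hsne : s.Nonempty := by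
    by_contra h
    rw [Set.not_nonempty_iff_eq_empty] at h
    have h2 := hmax (t := {T}) Set.subsingleton_singleton.isChain
      (by rw [h]; exact Set.empty_subset _)
    rw [h] at h2
    exact (Set.singleton_ne_empty T) h2.symm
  have hTs : T ∈ s := by
    have hch2 : IsChain (· ≤ ·) (insert T s) := hchain.insert (fun y hy _ => Or.inr (hT y))
    have := hmax hch2 (Set.subset_insert _ _)
    rw [this]
    exact Set.mem_insert _ _
  obtain ⟨p, hps, hpmin⟩ := Set.Finite.exists_minimalFor id s hsfin hsne
  have hple : ∀ y ∈ s, p ≤ y := by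
    intro y hy
    rcases eq_or_ne y p with h | h
    · rw [h]
    · rcases hchain hy hps h with h2 | h2
      · exact hpmin hy h2
      · exact h2
  have hpgmin : ∀ y, ¬ y < p := by
    intro y hy
    have hins : IsChain (· ≤ ·) (insert y s) :=
      hchain.insert (fun w hw _ => Or.inl (le_trans hy.le (hple w hw)))
    have he := hmax hins (Set.subset_insert _ _)
    have hys : y ∈ s := by rw [he]; exact Set.mem_insert _ _
    exact absurd (le_antisymm (hple y hys) hy.le) (Ne.symm hy.ne)
  refine ⟨p, hps, hpgmin, ?_⟩
  have hinj : Set.InjOn (fun x : ↥(JP n m b) => rho n m b x.1) s := by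
    intro x hx y hy hxy
    by_contra hne
    simp only at hxy
    rcases hchain hx hy hne with h | h
    · have := rhoJ_lt hb (lt_of_le_of_ne h hne)
      omega
    · have := rhoJ_lt hb (lt_of_le_of_ne h (Ne.symm hne))
      omega
  have himg : (fun x : ↥(JP n m b) => rho n m b x.1) '' s
      = Set.Icc (rho n m b p.1) (rho n m b T.1) := by
    apply Set.Subset.antisymm
    · rintro k ⟨x, hx, rfl⟩
      exact ⟨rhoJ_le hb (hple x hx), rhoJ_le hb (hT x)⟩
    · rintro k ⟨hk1, hk2⟩
      by_contra hkn
      rw [Set.mem_image] at hkn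
      push_neg at hkn
      have hA : p ∈ {y : ↥(JP n m b) | y ∈ s ∧ rho n m b y.1 < k} :=
        ⟨hps, lt_of_le_of_ne hk1 (hkn p hps)⟩
      have hBT : T ∈ {y : ↥(JP n m b) | y ∈ s ∧ k ≤ rho n m b y.1} := ⟨hTs, hk2⟩
      obtain ⟨x, hxA, hxmax⟩ := Set.Finite.exists_maximalFor id
        {y : ↥(JP n m b) | y ∈ s ∧ rho n m b y.1 < k}
        (hsfin.subset (fun y hy => hy.1)) ⟨p, hA⟩
      obtain ⟨x', hx'B, hx'min⟩ := Set.Finite.exists_minimalFor id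
        {y : ↥(JP n m b) | y ∈ s ∧ k ≤ rho n m b y.1}
        (hsfin.subset (fun y hy => hy.1)) ⟨T, hBT⟩
      have hxub : ∀ y ∈ s, rho n m b y.1 < k → y ≤ x := by
        intro y hy hyk
        rcases eq_or_ne y x with h | h
        · rw [h]
        · rcases hchain hy hxA.1 h with h2 | h2
          · exact h2
          · exact hxmax ⟨hy, hyk⟩ h2
      have hx'lb : ∀ y ∈ s, k ≤ rho n m b y.1 → x' ≤ y := by
        intro y hy hyk
        rcases eq_or_ne y x' with h | h
        · rw [h]
        · rcases hchain hy hx'B.1 h with h2 | h2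
          · exact hx'min ⟨hy, hyk⟩ h2
          · exact h2
      have hxx' : x < x' := by
        have hne : x ≠ x' := by
          intro h
          have h1 := hxA.2
          have h2 := hx'B.2
          rw [h] at h1
          omega
        rcases hchain hxA.1 hx'B.1 hne with h | h
        · exact lt_of_le_of_ne h hne
        · exfalso
          have := rhoJ_le hb h
          have h1 := hxA.2
          have h2 := hx'B.2
          omega
      obtain ⟨z, hz1, hz2, hz3⟩ := step_lemma hb hxx'
      have hzs : z ∈ s := by
        have hchz : IsChain (· ≤ ·) (insert z s) := by
          apply hchain.insert
          intro w hw _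
          rcases Nat.lt_or_ge (rho n m b w.1) k with hwk | hwk
          · exact Or.inr (le_trans (hxub w hw hwk) hz1.le)
          · exact Or.inl (le_trans hz2 (hx'lb w hw hwk))
        have := hmax hchz (Set.subset_insert _ _)
        rw [this]
        exact Set.mem_insert _ _
      rcases Nat.lt_or_ge (rho n m b z.1) k with hzk | hzk
      · have h4 := rhoJ_le hb (hxub z hzs hzk)
        omega
      · have h5 := hxA.2
        exact hkn z hzs (by omega)
  have hcalc : s.ncard = (Set.Icc (rho n m b p.1) (rho n m b T.1)).ncard := by
    rw [← himg, Set.ncard_image_of_injOn hinj]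
  rw [hcalc, ← Finset.coe_Icc, Set.ncard_coe_finset, Nat.card_Icc]

end Aux5
theorem stmt9 (n m : ℕ) (hm : 1 ≤ m) (hmn : m ≤ n) (b : Fin m → ℕ)
    (hb : b ∈ Gamma n m) :
    -- `JP` is pure (all maximal chains have the same cardinality, hence length) iff
    -- `b l - 2 l` is constant on the indices `l_1, …, l_u`
    -- (stated additively: `b l - 2 l = b l' - 2 l'` iff `b l + 2 l' = b l' + 2 l`).
    (∀ s t : Set ↥(JP n m b), IsMaxChain (· ≤ ·) s → IsMaxChain (· ≤ ·) t →
        s.ncard = t.ncard) ↔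
      (∀ l l' : Fin m, GapIdx n m b l → GapIdx n m b l' →
        b l + 2 * l'.1 = b l' + 2 * l.1) := by
  constructor
  · intro hpure l l' hl hl'
    obtain ⟨hins, hmin⟩ := gap_to_min hb hl
    obtain ⟨hins', hmin'⟩ := gap_to_min hb hl'
    obtain ⟨T, hT⟩ := exists_top hb (jj hb hins)
    obtain ⟨s, hsmax, hsub⟩ :=
      (Set.subsingleton_singleton (a := jj hb hins)).isChain.exists_maxChain
    obtain ⟨t, htmax, htub⟩ :=
      (Set.subsingleton_singleton (a := jj hb hins')).isChain.exists_maxChain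
    obtain ⟨p, hps, hpmin, hpcard⟩ := maxchain_card hb T hT s hsmax
    obtain ⟨q, hqt, hqmin, hqcard⟩ := maxchain_card hb T hT t htmax
    have hxls : jj hb hins ∈ s := hsub (Set.mem_singleton _)
    have hxlt : jj hb hins' ∈ t := htub (Set.mem_singleton _)
    have hpeq : p = jj hb hins := by
      rcases eq_or_ne p (jj hb hins) with h | h
      · exact h
      · exfalso
        rcases hsmax.1 hps hxls h with h2 | h2
        · exact hmin p (lt_of_le_of_ne h2 h)
        · exact hpmin _ (lt_of_le_of_ne h2 (Ne.symm h))
    have hqeq : q = jj hb hins' := by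
      rcases eq_or_ne q (jj hb hins') with h | h
      · exact h
      · exfalso
        rcases htmax.1 hqt hxlt h with h2 | h2
        · exact hmin' q (lt_of_le_of_ne h2 h)
        · exact hqmin _ (lt_of_le_of_ne h2 (Ne.symm h))
    have hcards := hpure s t hsmax htmax
    rw [hpcard, hqcard, hpeq, hqeq] at hcards
    have hrp := rho_tup hb hins (jj hb hins).1 (jj_val hb hins)
    have hrq := rho_tup hb hins' (jj hb hins').1 (jj_val hb hins')
    have hrpT : rho n m b (jj hb hins).1 ≤ rho n m b T.1 := rhoJ_le hb (hT _)
    have hrqT : rho n m b (jj hb hins').1 ≤ rho n m b T.1 := rhoJ_le hb (hT _)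
    have hbl := b_lb hb l
    have hbl' := b_lb hb l'
    have hl2 := l.2
    have hl2' := l'.2
    omega
  · intro harith s t hsmax htmax
    by_cases hne : Nonempty ↥(JP n m b)
    · obtain ⟨x0⟩ := hne
      obtain ⟨T, hT⟩ := exists_top hb x0
      obtain ⟨p, hps, hpmin, hpcard⟩ := maxchain_card hb T hT s hsmax
      obtain ⟨q, hqt, hqmin, hqcard⟩ := maxchain_card hb T hT t htmax
      obtain ⟨l, hgl, hinsl, hpl⟩ := min_to_gap hb hpmin
      obtain ⟨l', hgl', hinsl', hql⟩ := min_to_gap hb hqmin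
      have h1 := harith l l' hgl hgl'
      have hrp := rho_tup hb hinsl p.1 hpl
      have hrq := rho_tup hb hinsl' q.1 hql
      have hbl := b_lb hb l
      have hbl' := b_lb hb l'
      have hl2 := l.2
      have hl2' := l'.2
      rw [hpcard, hqcard]
      have heq : rho n m b p.1 = rho n m b q.1 := by omega
      rw [heq]
    · have hempty : IsEmpty ↥(JP n m b) := not_nonempty_iff.mp hne
      rw [Set.eq_empty_of_isEmpty s, Set.eq_empty_of_isEmpty t]
end
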